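/- Let q ∈ {1,-1} and A = [[-qJ, I],[-I, -qJ]] with J = [[0,1],[-1,0]]. Then (1/2π)∫₀^{2π} exp(-τA) dτ = (1/2)·[[I, -qJ],[qJ, I]]. -/

import Mathlib

/-!
Write `-A = R + S` with `R = diag(qJ, qJ)` and `S = [[0, -I], [I, 0]]`. For `q = ±1` both square
to `-1` and they commute, so `exp (τ • M) = cos τ • 1 + sin τ • M` for `M = R, S` (the real
algebra map `ℂ → Mat₄(ℝ)` sending `i ↦ M` carries the complex exponential there), and
`exp (-τ • A) = cos² τ • 1 + sin τ cos τ • (R + S) + sin² τ • R S`.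
Over a period `cos²` and `sin²` average to `1/2` and `sin · cos` to `0`, leaving
`(1 + R S) / 2`, and `R S = [[0, -qJ], [qJ, 0]]`.
-/

open scoped Matrix

/-- `J` is the standard 2×2 rotation generator. -/
noncomputable def J : Matrix (Fin 2) (Fin 2) ℝ := !![0, 1; -1, 0]

/-- The 4×4 block matrix `A = [[-qJ, I],[-I, -qJ]]`. -/
noncomputable def A (q : ℝ) : Matrix (Fin 2 ⊕ Fin 2) (Fin 2 ⊕ Fin 2) ℝ :=
  Matrix.fromBlocks (-(q • J)) 1 (-1) (-(q • J))

open Real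

theorem NormedSpace.exp_smul_of_mul_self_eq_neg_one {𝔸 : Type*} [NormedRing 𝔸]
    [NormedAlgebra ℝ 𝔸] [CompleteSpace 𝔸] {M : 𝔸} (hM : M * M = -1) (s : ℝ) :
    exp (s • M) = cos s • 1 + sin s • M := by
  let _ : Algebra ℚ 𝔸 := RestrictScalars.algebra ℚ ℝ 𝔸
  let f := Complex.lift ⟨M, hM⟩
  have hf : Continuous f := f.toLinearMap.continuous_of_finiteDimensional
  have hsM : f (s * Complex.I) = s • M := by simp [f]
  rw [← hsM, ← map_exp f hf, ← Complex.exp_eq_exp_ℂ, Complex.exp_mul_I]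
  simp [f, Algebra.algebraMap_eq_smul_one, Complex.cos_ofReal_re, Complex.sin_ofReal_re]

namespace Matrix

theorem exp_smul_of_mul_self_eq_neg_one {n : Type*} [Fintype n] [DecidableEq n]
    {M : Matrix n n ℝ} (hM : M * M = -1) (s : ℝ) :
    NormedSpace.exp (s • M) = cos s • 1 + sin s • M :=
  open scoped Norms.Operator in NormedSpace.exp_smul_of_mul_self_eq_neg_one hM s

theorem exp_smul_add_of_commute {n : Type*} [Fintype n] [DecidableEq n]
    {M N : Matrix n n ℝ} (hMN : Commute M N) (hM : M * M = -1) (hN : N * N = -1) (τ : ℝ) :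
    NormedSpace.exp (τ • (M + N)) =
      cos τ ^ 2 • 1 + (sin τ * cos τ) • (M + N) + sin τ ^ 2 • (M * N) := by
  rw [smul_add, exp_add_of_commute _ _ ((hMN.smul_left τ).smul_right τ),
    exp_smul_of_mul_self_eq_neg_one hM, exp_smul_of_mul_self_eq_neg_one hN]
  simp only [add_mul, mul_add, smul_mul_smul_comm, one_mul, mul_one]
  module

variable {n R : Type*} [Fintype n] [DecidableEq n] [CommRing R]

theorem fromBlocks_diag_mul_self {X : Matrix n n R} (hX : X * X = -1) :
    fromBlocks X 0 0 X * fromBlocks X 0 0 X = -1 := by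
  simp [fromBlocks_multiply, hX, ← fromBlocks_one, fromBlocks_neg]

theorem fromBlocks_neg_one_one_mul_self :
    fromBlocks 0 (-1) 1 0 * fromBlocks 0 (-1) 1 0 = (-1 : Matrix (n ⊕ n) (n ⊕ n) R) := by
  simp [fromBlocks_multiply, ← fromBlocks_one, fromBlocks_neg]

theorem fromBlocks_diag_mul_fromBlocks_neg_one_one (X : Matrix n n R) :
    fromBlocks X 0 0 X * fromBlocks 0 (-1) 1 0 = fromBlocks 0 (-X) X 0 := by
  simp [fromBlocks_multiply]

theorem commute_fromBlocks_diag_fromBlocks_neg_one_one (X : Matrix n n R) :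
    Commute (fromBlocks X 0 0 X) (fromBlocks 0 (-1) 1 0) := by
  simp [Commute, SemiconjBy, fromBlocks_multiply]

end Matrix

theorem integral_cos_sq_add_sin_mul_cos_add_sin_sq_div_two_pi (a b c : ℝ) :
    (1 / (2 * π)) * ∫ τ in (0:ℝ)..(2 * π), cos τ ^ 2 * a + sin τ * cos τ * b + sin τ ^ 2 * c
      = (a + c) / 2 := by
  have hinteg : ∀ f : ℝ → ℝ, Continuous f → IntervalIntegrable f MeasureTheory.volume 0 (2 * π) :=
    fun f hf => hf.intervalIntegrable _ _
  rw [intervalIntegral.integral_add (hinteg _ (by fun_prop)) (hinteg _ (by fun_prop)),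
    intervalIntegral.integral_add (hinteg _ (by fun_prop)) (hinteg _ (by fun_prop)),
    intervalIntegral.integral_mul_const, intervalIntegral.integral_mul_const,
    intervalIntegral.integral_mul_const, integral_cos_sq, integral_sin_sq, integral_sin_mul_cos₁]
  simp only [sin_two_pi, cos_two_pi, sin_zero, cos_zero]
  field_simp
  ring

theorem J_mul_self : J * J = -1 := by
  ext i j
  fin_cases i <;> fin_cases j <;> simp [J]

theorem smul_J_mul_self {q : ℝ} (hq : q = 1 ∨ q = -1) : (q • J) * (q • J) = -1 := by
  have hq2 : q * q = 1 := by rcases hq with rfl | rfl <;> norm_num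
  rw [smul_mul_smul_comm, hq2, one_smul, J_mul_self]

theorem neg_A (q : ℝ) :
    -A q = Matrix.fromBlocks (q • J) 0 0 (q • J) + Matrix.fromBlocks 0 (-1) 1 0 := by
  simp [A, Matrix.fromBlocks_add, Matrix.fromBlocks_neg]

theorem exp_neg_smul_A {q : ℝ} (hq : q = 1 ∨ q = -1) (τ : ℝ) :
    NormedSpace.exp (-(τ • A q)) = cos τ ^ 2 • 1 + (sin τ * cos τ) • (-A q) +
      sin τ ^ 2 • Matrix.fromBlocks 0 (-(q • J)) (q • J) 0 := by
  rw [← smul_neg, neg_A,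
    Matrix.exp_smul_add_of_commute (Matrix.commute_fromBlocks_diag_fromBlocks_neg_one_one _)
      (Matrix.fromBlocks_diag_mul_self (smul_J_mul_self hq))
      Matrix.fromBlocks_neg_one_one_mul_self,
    Matrix.fromBlocks_diag_mul_fromBlocks_neg_one_one]

/-- For `q = ±1`, the entrywise average of `exp(-τA)` over `τ ∈ [0, 2π]` equals
`(1/2)·[[I, -qJ],[qJ, I]]`. -/
theorem stmt6 (q : ℝ) (hq : q = 1 ∨ q = -1) (i j : Fin 2 ⊕ Fin 2) :
    (1 / (2 * Real.pi)) * ∫ τ in (0:ℝ)..(2 * Real.pi),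
        (NormedSpace.exp (-(τ • A q))) i j
      = ((1 / 2 : ℝ) • Matrix.fromBlocks 1 (-(q • J)) (q • J) 1) i j := by
  have hblocks : 1 + Matrix.fromBlocks 0 (-(q • J)) (q • J) 0 =
      Matrix.fromBlocks (1 : Matrix (Fin 2) (Fin 2) ℝ) (-(q • J)) (q • J) 1 := by
    simp [← Matrix.fromBlocks_one, Matrix.fromBlocks_add]
  rw [← hblocks]
  simp only [exp_neg_smul_A hq, Matrix.add_apply, Matrix.smul_apply, smul_eq_mul,
    integral_cos_sq_add_sin_mul_cos_add_sin_sq_div_two_pi]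
  ring
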